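/- arXiv:2306.01421 — 9 statements merged into one kernel-verified Lean document; each statement's English description precedes it below -/
import Mathlib

section
/- Let A : X → Y be a bounded linear operator between real Hilbert spaces and G : X → X be monotone (⟨G(x)−G(z), x−z⟩ ≥ 0 for all x,z). Fix α > 0, y₁, y₂ ∈ Y, and suppose x₁, x₂ ∈ X satisfy A*(A xᵢ − yᵢ) + α G(xᵢ) = 0 for i = 1,2. Then ‖A(x₁ − x₂)‖ ≤ ‖y₁ − y₂‖. -/
open scoped InnerProductSpace

section

variable {E : Type*} [NormedAddCommGroup E] [InnerProductSpace ℝ E]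

theorem norm_le_norm_of_inner_sub_self_nonpos {u v : E} (h : ⟪u - v, u⟫_ℝ ≤ 0) :
    ‖u‖ ≤ ‖v‖ := by
  have hsq : ‖u‖ ^ 2 ≤ ‖v‖ * ‖u‖ :=
    calc ‖u‖ ^ 2 = ⟪u, u⟫_ℝ := (real_inner_self_eq_norm_sq u).symm
      _ ≤ ⟪v, u⟫_ℝ := by rw [inner_sub_left] at h; linarith
      _ ≤ ‖v‖ * ‖u‖ := real_inner_le_norm v u
  rcases (norm_nonneg u).eq_or_lt with hu | hu
  · rw [← hu]
    exact norm_nonneg v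
  · nlinarith

end

section

variable {X Y : Type*} [NormedAddCommGroup X] [InnerProductSpace ℝ X]
  [NormedAddCommGroup Y] [InnerProductSpace ℝ Y] [CompleteSpace X] [CompleteSpace Y]

theorem inner_sub_self_nonpos_of_adjoint_eq (A : X →L[ℝ] Y) {α : ℝ} (hα : 0 ≤ α)
    {x₁ x₂ g₁ g₂ : X} {y₁ y₂ : Y} (hg : 0 ≤ ⟪g₁ - g₂, x₁ - x₂⟫_ℝ)
    (h₁ : (ContinuousLinearMap.adjoint A) (A x₁ - y₁) + α • g₁ = 0)
    (h₂ : (ContinuousLinearMap.adjoint A) (A x₂ - y₂) + α • g₂ = 0) :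
    ⟪A (x₁ - x₂) - (y₁ - y₂), A (x₁ - x₂)⟫_ℝ ≤ 0 := by
  have hdiff :
      (ContinuousLinearMap.adjoint A) (A (x₁ - x₂) - (y₁ - y₂)) = -(α • (g₁ - g₂)) := by
    simp only [map_sub] at h₁ h₂ ⊢
    linear_combination (norm := module) h₁ - h₂
  rw [← ContinuousLinearMap.adjoint_inner_left, hdiff, inner_neg_left, real_inner_smul_left]
  exact neg_nonpos.mpr (mul_nonneg hα hg)

end

theorem stmt2 {X Y : Type*} [NormedAddCommGroup X] [InnerProductSpace ℝ X]
    [NormedAddCommGroup Y] [InnerProductSpace ℝ Y] [CompleteSpace X] [CompleteSpace Y]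
    (A : X →L[ℝ] Y) (G : X → X)
    (hmono : ∀ x z : X, 0 ≤ ⟪G x - G z, x - z⟫_ℝ)
    (α : ℝ) (hα : 0 < α) (y₁ y₂ : Y) (x₁ x₂ : X)
    (h₁ : (ContinuousLinearMap.adjoint A) (A x₁ - y₁) + α • G x₁ = 0)
    (h₂ : (ContinuousLinearMap.adjoint A) (A x₂ - y₂) + α • G x₂ = 0) :
    ‖A (x₁ - x₂)‖ ≤ ‖y₁ - y₂‖ :=
  norm_le_norm_of_inner_sub_self_nonpos
    (inner_sub_self_nonpos_of_adjoint_eq A hα.le (hmono x₁ x₂) h₁ h₂)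
end

section
/- Let A : X → Y be a bounded linear operator, G : X → X monotone, α > 0, and suppose x₁, x₂ satisfy A*(A xᵢ − yᵢ) + α G(xᵢ) = 0 for i = 1,2. Then the symmetric Bregman distance satisfies ⟨G(x₁)−G(x₂), x₁ − x₂⟩ ≤ (1/(2α))‖y₁ − y₂‖². -/
open scoped InnerProductSpace

section

variable {X Y : Type*} [NormedAddCommGroup X] [InnerProductSpace ℝ X]
  [NormedAddCommGroup Y] [InnerProductSpace ℝ Y]

theorem real_inner_sub_norm_sq_le (d v : Y) : ⟪d, v⟫_ℝ - ‖v‖ ^ 2 ≤ ‖d‖ ^ 2 / 4 := by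
  have h := norm_sub_sq_real d ((2 : ℝ) • v)
  rw [real_inner_smul_right, norm_smul, Real.norm_two] at h
  nlinarith [sq_nonneg ‖d - (2 : ℝ) • v‖]

variable [CompleteSpace X] [CompleteSpace Y]

theorem mul_inner_sub_eq_of_adjoint_residual (A : X →L[ℝ] Y) (α : ℝ) {y₁ y₂ : Y}
    {x₁ x₂ g₁ g₂ : X}
    (h₁ : (ContinuousLinearMap.adjoint A) (A x₁ - y₁) + α • g₁ = 0)
    (h₂ : (ContinuousLinearMap.adjoint A) (A x₂ - y₂) + α • g₂ = 0) :
    α * ⟪g₁ - g₂, x₁ - x₂⟫_ℝ = ⟪y₁ - y₂, A (x₁ - x₂)⟫_ℝ - ‖A (x₁ - x₂)‖ ^ 2 := by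
  have paired : ∀ {x g : X} {y : Y},
      (ContinuousLinearMap.adjoint A) (A x - y) + α • g = 0 →
        ⟪A x - y, A (x₁ - x₂)⟫_ℝ + α * ⟪g, x₁ - x₂⟫_ℝ = 0 := by
    intro x g y h
    have := congrArg (fun z => ⟪z, x₁ - x₂⟫_ℝ) h
    simpa only [inner_add_left, ContinuousLinearMap.adjoint_inner_left,
      real_inner_smul_left, inner_zero_left] using this
  have e₁ := paired h₁
  have e₂ := paired h₂
  rw [← real_inner_self_eq_norm_sq]
  simp only [map_sub, inner_sub_left, inner_sub_right] at e₁ e₂ ⊢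
  linarith

end

theorem stmt3_general {X Y : Type*} [NormedAddCommGroup X] [InnerProductSpace ℝ X]
    [NormedAddCommGroup Y] [InnerProductSpace ℝ Y] [CompleteSpace X] [CompleteSpace Y]
    (A : X →L[ℝ] Y) (G : X → X)
    (α : ℝ) (hα : 0 < α) (y₁ y₂ : Y) (x₁ x₂ : X)
    (h₁ : (ContinuousLinearMap.adjoint A) (A x₁ - y₁) + α • G x₁ = 0)
    (h₂ : (ContinuousLinearMap.adjoint A) (A x₂ - y₂) + α • G x₂ = 0) :
    ⟪G x₁ - G x₂, x₁ - x₂⟫_ℝ ≤ 1 / (2 * α) * ‖y₁ - y₂‖ ^ 2 := by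
  have bound : α * ⟪G x₁ - G x₂, x₁ - x₂⟫_ℝ ≤ ‖y₁ - y₂‖ ^ 2 / 4 :=
    mul_inner_sub_eq_of_adjoint_residual A α h₁ h₂ ▸ real_inner_sub_norm_sq_le _ _
  rw [div_mul_eq_mul_div, one_mul, le_div_iff₀ (by positivity)]
  nlinarith [sq_nonneg ‖y₁ - y₂‖]

theorem stmt3 {X Y : Type*} [NormedAddCommGroup X] [InnerProductSpace ℝ X]
    [NormedAddCommGroup Y] [InnerProductSpace ℝ Y] [CompleteSpace X] [CompleteSpace Y]
    (A : X →L[ℝ] Y) (G : X → X)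
    (hmono : ∀ x z : X, 0 ≤ ⟪G x - G z, x - z⟫_ℝ)
    (α : ℝ) (hα : 0 < α) (y₁ y₂ : Y) (x₁ x₂ : X)
    (h₁ : (ContinuousLinearMap.adjoint A) (A x₁ - y₁) + α • G x₁ = 0)
    (h₂ : (ContinuousLinearMap.adjoint A) (A x₂ - y₂) + α • G x₂ = 0) :
    ⟪G x₁ - G x₂, x₁ - x₂⟫_ℝ ≤ 1 / (2 * α) * ‖y₁ - y₂‖ ^ 2 :=
  stmt3_general A G α hα y₁ y₂ x₁ x₂ h₁ h₂
end

section
/- Let A : X → Y be bounded linear with ‖A‖ ≤ 1 and G : X → X satisfy ‖(G−id)(x) − (G−id)(z)‖ ≤ L‖x−z‖ with L < 1. For α > 0 and β = 1/(‖A‖² + α), the map F(x) = x − β(A*(A x − y) + α G(x)) is a contraction with Lipschitz constant at most 1 − αβ(1−L) < 1; consequently the equation A*(A x − y) + α G(x) = 0 has a unique solution for every y ∈ Y. -/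
open scoped RealInnerProductSpace

set_option maxHeartbeats 1000000 in
theorem stmt4 {X Y : Type*} [NormedAddCommGroup X] [InnerProductSpace ℝ X]
    [NormedAddCommGroup Y] [InnerProductSpace ℝ Y] [CompleteSpace X] [CompleteSpace Y]
    (A : X →L[ℝ] Y) (hA : ‖A‖ ≤ 1) (G : X → X) (L : ℝ) (hL : L < 1)
    (hres : ∀ x z : X, ‖(G x - x) - (G z - z)‖ ≤ L * ‖x - z‖)
    (α : ℝ) (hα : 0 < α) (y : Y) (β : ℝ) (hβ : β = 1 / (‖A‖ ^ 2 + α))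
    (F : X → X)
    (hF : ∀ x : X, F x = x - β • ((ContinuousLinearMap.adjoint A) (A x - y) + α • G x)) :
    (∀ x z : X, ‖F x - F z‖ ≤ (1 - α * β * (1 - L)) * ‖x - z‖) ∧
      (1 - α * β * (1 - L) < 1) ∧
      (∃! x : X, (ContinuousLinearMap.adjoint A) (A x - y) + α • G x = 0) := by
  have hden : 0 < ‖A‖ ^ 2 + α := by positivity
  have hβpos : 0 < β := by rw [hβ]; positivity
  have hβeq : β * (‖A‖ ^ 2 + α) = 1 := by
    rw [hβ]; field_simp
  have h1 : 1 - α * β = β * ‖A‖ ^ 2 := by nlinarith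
  have h1nn : 0 ≤ 1 - α * β := by nlinarith [sq_nonneg ‖A‖]
  have hAnorm : ‖ContinuousLinearMap.adjoint A‖ = ‖A‖ :=
    LinearIsometryEquiv.norm_map ContinuousLinearMap.adjoint A
  -- main Lipschitz estimate
  have key : ∀ x z : X, ‖F x - F z‖ ≤ (1 - α * β * (1 - L)) * ‖x - z‖ := by
    intro x z
    set u := x - z with hu
    set r := (G x - x) - (G z - z) with hr
    have hrle : ‖r‖ ≤ L * ‖u‖ := hres x z
    have hdecomp : F x - F z = ((1 - α * β) • u - β • (ContinuousLinearMap.adjoint A) (A u))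
        - (α * β) • r := by
      rw [hF x, hF z, hu, hr]
      have hAdj : (ContinuousLinearMap.adjoint A) (A (x - z)) =
          (ContinuousLinearMap.adjoint A) (A x - y) - (ContinuousLinearMap.adjoint A) (A z - y) := by
        rw [← map_sub]; congr 1; rw [map_sub]; abel
      rw [hAdj]
      module
    have hv : ‖(1 - α * β) • u - β • (ContinuousLinearMap.adjoint A) (A u)‖
        ≤ (1 - α * β) * ‖u‖ := by
      have hsq : ‖(1 - α * β) • u - β • (ContinuousLinearMap.adjoint A) (A u)‖ ^ 2
          ≤ ((1 - α * β) * ‖u‖) ^ 2 := by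
        rw [norm_sub_sq_real]
        have hinner : ⟪(1 - α * β) • u, β • (ContinuousLinearMap.adjoint A) (A u)⟫
            = (1 - α * β) * β * ‖A u‖ ^ 2 := by
          rw [real_inner_smul_left, real_inner_smul_right, real_inner_comm,
            ContinuousLinearMap.adjoint_inner_left, real_inner_self_eq_norm_sq]
          ring
        have hTn : ‖(ContinuousLinearMap.adjoint A) (A u)‖ ≤ ‖A‖ * ‖A u‖ := by
          calc ‖(ContinuousLinearMap.adjoint A) (A u)‖
              ≤ ‖ContinuousLinearMap.adjoint A‖ * ‖A u‖ :=
                ContinuousLinearMap.le_opNorm _ _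
            _ = ‖A‖ * ‖A u‖ := by rw [hAnorm]
        have hTn2 : ‖(ContinuousLinearMap.adjoint A) (A u)‖ ^ 2 ≤ ‖A‖ ^ 2 * ‖A u‖ ^ 2 := by
          nlinarith [norm_nonneg ((ContinuousLinearMap.adjoint A) (A u)), norm_nonneg (A u),
            norm_nonneg A]
        rw [hinner, norm_smul, norm_smul, Real.norm_eq_abs, Real.norm_eq_abs,
          abs_of_nonneg h1nn, abs_of_nonneg hβpos.le, mul_pow, mul_pow]
        have hβA : β ^ 2 * (‖A‖ ^ 2 * ‖A u‖ ^ 2) = (1 - α * β) * β * ‖A u‖ ^ 2 := by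
          rw [h1]; ring
        nlinarith [mul_le_mul_of_nonneg_left hTn2 (sq_nonneg β),
          mul_nonneg (mul_nonneg h1nn hβpos.le) (sq_nonneg ‖A u‖)]
      have h2 : (0:ℝ) ≤ (1 - α * β) * ‖u‖ := by positivity
      nlinarith [norm_nonneg ((1 - α * β) • u - β • (ContinuousLinearMap.adjoint A) (A u))]
    calc ‖F x - F z‖ ≤ ‖(1 - α * β) • u - β • (ContinuousLinearMap.adjoint A) (A u)‖
          + ‖(α * β) • r‖ := by rw [hdecomp]; exact norm_sub_le _ _
      _ ≤ (1 - α * β) * ‖u‖ + (α * β) * (L * ‖u‖) := by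
          refine add_le_add hv ?_
          rw [norm_smul, Real.norm_eq_abs, abs_of_nonneg (by positivity)]
          exact mul_le_mul_of_nonneg_left hrle (by positivity)
      _ = (1 - α * β * (1 - L)) * ‖u‖ := by ring
  have hlt : 1 - α * β * (1 - L) < 1 := by nlinarith [mul_pos (mul_pos hα hβpos) (show (0:ℝ) < 1 - L by linarith)]
  refine ⟨key, hlt, ?_⟩
  -- fixed point argument
  set k : ℝ := 1 - α * β * (1 - L) with hk
  have hcontr : ContractingWith k.toNNReal F := by
    constructor
    · exact_mod_cast Real.toNNReal_lt_one.mpr hlt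
    · refine LipschitzWith.of_dist_le_mul fun x z => ?_
      rw [dist_eq_norm, dist_eq_norm]
      calc ‖F x - F z‖ ≤ k * ‖x - z‖ := key x z
        _ ≤ (k.toNNReal : ℝ) * ‖x - z‖ :=
            mul_le_mul_of_nonneg_right (Real.le_coe_toNNReal k) (norm_nonneg _)
  have hiff : ∀ x : X, ((ContinuousLinearMap.adjoint A) (A x - y) + α • G x = 0 ↔ F x = x) := by
    intro x
    rw [hF x]
    constructor
    · intro h; rw [h, smul_zero, sub_zero]
    · intro h
      have h2 : β • ((ContinuousLinearMap.adjoint A) (A x - y) + α • G x) = 0 := by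
        rwa [sub_eq_self] at h
      rcases smul_eq_zero.mp h2 with h3 | h3
      · exact absurd h3 hβpos.ne'
      · exact h3
  refine ⟨hcontr.fixedPoint F, ?_, ?_⟩
  · exact (hiff _).mpr hcontr.fixedPoint_isFixedPt
  · intro x hx
    exact hcontr.fixedPoint_unique ((hiff x).mp hx)
end

section
/- Let G : X → X satisfy ‖(G−id)(x) − (G−id)(z)‖ ≤ L‖x−z‖ with L < 1 and let A : X → Y be bounded linear with kernel N = ker(A). If x₊ and x̃ both satisfy A x = y and G(x) ∈ N^⊥, then x₊ = x̃. -/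
theorem stmt5 {X Y : Type*} [NormedAddCommGroup X] [InnerProductSpace ℝ X]
    [NormedAddCommGroup Y] [InnerProductSpace ℝ Y]
    (A : X →L[ℝ] Y) (G : X → X) (L : ℝ) (hL : L < 1)
    (hres : ∀ x z : X, ‖(G x - x) - (G z - z)‖ ≤ L * ‖x - z‖)
    (y : Y) (xp xt : X)
    (h₁ : A xp = y) (h₂ : G xp ∈ (LinearMap.ker (A : X →ₗ[ℝ] Y))ᗮ)
    (h₃ : A xt = y) (h₄ : G xt ∈ (LinearMap.ker (A : X →ₗ[ℝ] Y))ᗮ) :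
    xp = xt := by
  obtain ⟨d, hd⟩ : ∃ d, d = xp - xt := ⟨_, rfl⟩
  have hdker : d ∈ LinearMap.ker (A : X →ₗ[ℝ] Y) := by
    simp [LinearMap.mem_ker, hd, map_sub, h₁, h₃]
  have hperp : (inner ℝ d (G xp - G xt) : ℝ) = 0 :=
    (Submodule.mem_orthogonal _ _).mp (Submodule.sub_mem _ h₂ h₄) d hdker
  have hsplit : (G xp - xp) - (G xt - xt) = (G xp - G xt) - d := by
    rw [hd]; abel
  have eq1 : (inner ℝ d d : ℝ) = - inner ℝ d ((G xp - xp) - (G xt - xt)) := by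
    rw [hsplit, inner_sub_right, hperp]; ring
  have h1 : (inner ℝ d d : ℝ) = ‖d‖ ^ 2 := real_inner_self_eq_norm_sq d
  have h2 : |(inner ℝ d ((G xp - xp) - (G xt - xt)) : ℝ)| ≤ ‖d‖ * (L * ‖d‖) :=
    (abs_real_inner_le_norm _ _).trans
      (by rw [hd]; exact mul_le_mul_of_nonneg_left (hres xp xt) (norm_nonneg _))
  have hbound : ‖d‖ ^ 2 ≤ L * ‖d‖ ^ 2 := by
    have h4 := neg_abs_le (inner ℝ d ((G xp - xp) - (G xt - xt)) : ℝ)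
    nlinarith [eq1, h1, h2]
  have hdz : d = 0 := by
    have : ‖d‖ ^ 2 = 0 := by nlinarith [sq_nonneg ‖d‖]
    exact norm_eq_zero.mp (pow_eq_zero_iff (n := 2) (by norm_num) |>.mp this)
  exact sub_eq_zero.mp (hd ▸ hdz)
end

section
/- Let A : X → Y be bounded linear, G : X → X satisfy ‖(G−id)(x) − (G−id)(z)‖ ≤ L‖x−z‖ with L ≥ 0, and α > 0. If x_α satisfies A*(A x_α − A x) + α G(x_α) = 0, then ‖x − x_α‖ ≥ α‖G(x)‖ / (‖A‖² + α(1+L)). -/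
theorem stmt8 {X Y : Type*} [NormedAddCommGroup X] [InnerProductSpace ℝ X]
    [NormedAddCommGroup Y] [InnerProductSpace ℝ Y] [CompleteSpace X] [CompleteSpace Y]
    (A : X →L[ℝ] Y) (G : X → X) (L : ℝ) (hL : 0 ≤ L)
    (hres : ∀ x z : X, ‖(G x - x) - (G z - z)‖ ≤ L * ‖x - z‖)
    (α : ℝ) (hα : 0 < α) (x xα : X)
    (heq : (ContinuousLinearMap.adjoint A) (A xα - A x) + α • G xα = 0) :
    ‖x - xα‖ ≥ α * ‖G x‖ / (‖A‖ ^ 2 + α * (1 + L)) := by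
  have hA : ‖(ContinuousLinearMap.adjoint A)‖ = ‖A‖ := (ContinuousLinearMap.adjoint : (X →L[ℝ] Y) ≃ₗᵢ⋆[ℝ] (Y →L[ℝ] X)).norm_map A
  have hsm : α • G xα = -((ContinuousLinearMap.adjoint A) (A xα - A x)) := by
    rw [eq_neg_iff_add_eq_zero, add_comm]; exact heq
  have h1 : α * ‖G xα‖ ≤ ‖A‖ ^ 2 * ‖x - xα‖ := by
    have h2 : ‖α • G xα‖ = α * ‖G xα‖ := by
      rw [norm_smul, Real.norm_eq_abs, abs_of_pos hα]
    have h3 : ‖(ContinuousLinearMap.adjoint A) (A xα - A x)‖ ≤ ‖A‖ * (‖A‖ * ‖xα - x‖) := by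
      calc ‖(ContinuousLinearMap.adjoint A) (A xα - A x)‖
          ≤ ‖(ContinuousLinearMap.adjoint A)‖ * ‖A xα - A x‖ :=
            (ContinuousLinearMap.adjoint A).le_opNorm _
        _ ≤ ‖A‖ * (‖A‖ * ‖xα - x‖) := by
            rw [hA]
            apply mul_le_mul_of_nonneg_left _ (norm_nonneg A)
            rw [← map_sub]; exact A.le_opNorm _
    have := h3
    rw [← h2, hsm, norm_neg]
    calc ‖(ContinuousLinearMap.adjoint A) (A xα - A x)‖
        ≤ ‖A‖ * (‖A‖ * ‖xα - x‖) := h3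
      _ = ‖A‖ ^ 2 * ‖x - xα‖ := by rw [norm_sub_rev xα x]; ring
  have h4 : ‖G x‖ ≤ ‖G x - G xα‖ + ‖G xα‖ := by
    have := norm_add_le (G x - G xα) (G xα); simpa using this
  have h5 : ‖G x - G xα‖ ≤ (1 + L) * ‖x - xα‖ := by
    have key : G x - G xα = ((G x - x) - (G xα - xα)) + (x - xα) := by abel
    calc ‖G x - G xα‖ = ‖((G x - x) - (G xα - xα)) + (x - xα)‖ := by rw [key]
      _ ≤ ‖(G x - x) - (G xα - xα)‖ + ‖x - xα‖ := norm_add_le _ _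
      _ ≤ L * ‖x - xα‖ + ‖x - xα‖ := by
          exact add_le_add_left (hres x xα) _
      _ = (1 + L) * ‖x - xα‖ := by ring
  have hden : 0 < ‖A‖ ^ 2 + α * (1 + L) := by positivity
  rw [ge_iff_le, div_le_iff₀ hden]
  calc α * ‖G x‖ ≤ α * (‖G x - G xα‖ + ‖G xα‖) :=
        mul_le_mul_of_nonneg_left h4 hα.le
    _ = α * ‖G x - G xα‖ + α * ‖G xα‖ := by ring
    _ ≤ α * ((1 + L) * ‖x - xα‖) + ‖A‖ ^ 2 * ‖x - xα‖ :=
        add_le_add (mul_le_mul_of_nonneg_left h5 hα.le) h1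
    _ = ‖x - xα‖ * (‖A‖ ^ 2 + α * (1 + L)) := by ring
end

section
/- Let G : X → X have residual ‖(G−id)(x)−(G−id)(z)‖ ≤ L‖x−z‖ with L < 1, and let S ⊆ X with G(S) ⊆ ker(A)^⊥ for a bounded linear A : X → Y. Then for all x₁, x₂ ∈ S with x₁ ≠ x₂, ‖P_{ker(A)}(x₁ − x₂)‖ ≤ L‖x₁ − x₂‖; in particular sup over distinct pairs of ‖P_{ker(A)}(x₁−x₂)‖/‖x₁−x₂‖ ≤ L < 1. -/
theorem stmt10 {X Y : Type*} [NormedAddCommGroup X] [InnerProductSpace ℝ X]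
    [NormedAddCommGroup Y] [InnerProductSpace ℝ Y]
    (A : X →L[ℝ] Y) [Submodule.HasOrthogonalProjection (LinearMap.ker (A : X →ₗ[ℝ] Y))]
    (G : X → X) (L : ℝ) (hL : L < 1)
    (hres : ∀ x z : X, ‖(G x - x) - (G z - z)‖ ≤ L * ‖x - z‖)
    (S : Set X) (hS : ∀ x ∈ S, G x ∈ (LinearMap.ker (A : X →ₗ[ℝ] Y))ᗮ) :
    (∀ x₁ ∈ S, ∀ x₂ ∈ S, x₁ ≠ x₂ →
        ‖(Submodule.orthogonalProjectionOnto (LinearMap.ker (A : X →ₗ[ℝ] Y)) (x₁ - x₂) : X)‖ ≤ L * ‖x₁ - x₂‖) ∧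
      ∀ x₁ ∈ S, ∀ x₂ ∈ S, x₁ ≠ x₂ →
        ‖(Submodule.orthogonalProjectionOnto (LinearMap.ker (A : X →ₗ[ℝ] Y)) (x₁ - x₂) : X)‖ / ‖x₁ - x₂‖ ≤ L ∧ L < 1 := by
  have key : ∀ x₁ ∈ S, ∀ x₂ ∈ S,
      ‖(Submodule.orthogonalProjectionOnto (LinearMap.ker (A : X →ₗ[ℝ] Y)) (x₁ - x₂) : X)‖ ≤ L * ‖x₁ - x₂‖ := by
    intro x₁ h₁ x₂ h₂
    set K := LinearMap.ker (A : X →ₗ[ℝ] Y) with hK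
    have hG : Submodule.orthogonalProjectionOnto K (G x₁ - G x₂) = 0 :=
      Submodule.orthogonalProjectionOnto_apply_of_mem_orthogonal
        (Submodule.sub_mem _ (hS x₁ h₁) (hS x₂ h₂))
    have heq : Submodule.orthogonalProjectionOnto K (x₁ - x₂)
        = Submodule.orthogonalProjectionOnto K ((x₁ - G x₁) - (x₂ - G x₂))
          + Submodule.orthogonalProjectionOnto K (G x₁ - G x₂) := by
      rw [← map_add]; congr 1; abel
    have h1 : ‖(Submodule.orthogonalProjectionOnto K (x₁ - x₂) : X)‖
        ≤ ‖(x₁ - G x₁) - (x₂ - G x₂)‖ := by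
      rw [heq, hG, add_zero]
      calc ‖(Submodule.orthogonalProjectionOnto K ((x₁ - G x₁) - (x₂ - G x₂)) : X)‖
          ≤ ‖Submodule.orthogonalProjectionOnto K‖ * ‖(x₁ - G x₁) - (x₂ - G x₂)‖ :=
            (Submodule.orthogonalProjectionOnto K).le_opNorm _
        _ ≤ 1 * ‖(x₁ - G x₁) - (x₂ - G x₂)‖ :=
            mul_le_mul_of_nonneg_right (Submodule.orthogonalProjectionOnto_norm_le K) (norm_nonneg _)
        _ = _ := one_mul _
    have h2 : ‖(x₁ - G x₁) - (x₂ - G x₂)‖ ≤ L * ‖x₁ - x₂‖ := by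
      have e : (x₁ - G x₁) - (x₂ - G x₂) = -((G x₁ - x₁) - (G x₂ - x₂)) := by abel
      rw [e, norm_neg]
      exact hres x₁ x₂
    exact h1.trans h2
  refine ⟨fun x₁ h₁ x₂ h₂ _ => key x₁ h₁ x₂ h₂, fun x₁ h₁ x₂ h₂ hne => ⟨?_, hL⟩⟩
  have hpos : (0:ℝ) < ‖x₁ - x₂‖ := by simpa [sub_eq_zero] using hne
  rw [div_le_iff₀ hpos]
  exact key x₁ h₁ x₂ h₂
end

section
/- Let G : X → X satisfy ‖(G−id)(x)−(G−id)(z)‖ ≤ L‖x−z‖ with L < 1 and let A : X → Y be bounded linear. If x ∈ X has G(x) ∉ ker(A)^⊥ and x₊ satisfies A x₊ = A x and G(x₊) ∈ ker(A)^⊥, then ‖x₊ − x‖ ≥ ‖P_{ker(A)} G(x)‖ / (1+L). -/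
theorem stmt12 {X Y : Type*} [NormedAddCommGroup X] [InnerProductSpace ℝ X]
    [NormedAddCommGroup Y] [InnerProductSpace ℝ Y]
    (A : X →L[ℝ] Y) [Submodule.HasOrthogonalProjection (LinearMap.ker (A : X →ₗ[ℝ] Y))]
    (G : X → X) (L : ℝ) (hL : L < 1)
    (hres : ∀ x z : X, ‖(G x - x) - (G z - z)‖ ≤ L * ‖x - z‖)
    (x xp : X) (hx : G x ∉ (LinearMap.ker (A : X →ₗ[ℝ] Y))ᗮ)
    (h₁ : A xp = A x) (h₂ : G xp ∈ (LinearMap.ker (A : X →ₗ[ℝ] Y))ᗮ) :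
    ‖xp - x‖ ≥ ‖(Submodule.orthogonalProjectionOnto (LinearMap.ker (A : X →ₗ[ℝ] Y)) (G x) : X)‖ / (1 + L) := by
  have hne : x ≠ xp := by
    rintro rfl; exact hx h₂
  have hpos : 0 < ‖x - xp‖ := by
    simpa [sub_eq_zero] using hne
  have hL0 : 0 ≤ L := by
    have := hres x xp
    nlinarith [norm_nonneg ((G x - x) - (G xp - xp))]
  have h1L : (0:ℝ) < 1 + L := by linarith
  set K := LinearMap.ker (A : X →ₗ[ℝ] Y)
  have hPz : (Submodule.orthogonalProjectionOnto K (G xp) : X) = 0 := by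
    rw [Submodule.orthogonalProjectionOnto_apply_of_mem_orthogonal h₂]; rfl
  have key : ‖(Submodule.orthogonalProjectionOnto K (G x) : X)‖ ≤ (1 + L) * ‖xp - x‖ := by
    have h3 : ‖(Submodule.orthogonalProjectionOnto K (G x) : X)‖
        = ‖(Submodule.orthogonalProjectionOnto K (G x - G xp) : X)‖ := by
      rw [map_sub]
      simp [hPz]
    rw [h3]
    have h4 : ‖(Submodule.orthogonalProjectionOnto K (G x - G xp) : X)‖ ≤ ‖G x - G xp‖ :=
      by simpa using (Submodule.orthogonalProjectionOnto K).le_of_opNorm_le (Submodule.orthogonalProjectionOnto_norm_le K) (G x - G xp)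
    have h5 : G x - G xp = ((G x - x) - (G xp - xp)) + (x - xp) := by abel
    have h6 : ‖G x - G xp‖ ≤ L * ‖x - xp‖ + ‖x - xp‖ := by
      rw [h5]
      exact le_trans (norm_add_le _ _) (by gcongr; exact hres x xp)
    have h7 : ‖x - xp‖ = ‖xp - x‖ := norm_sub_rev _ _
    nlinarith
  rw [ge_iff_le, div_le_iff₀ h1L]
  linarith
end

section
/- Let A : X → Y be bounded linear, G : X → X with contractive residual of constant L < 1, and α > 0. Suppose x satisfies ‖A*(A x − y) + α G(x)‖ ≤ ε and x* satisfies A*(A x* − y) + α G(x*) = 0. Then ‖x − x*‖ ≤ ε / (α(1−L)). -/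
/-!
The map `F x = A†(A x - y) + α • G x` is strongly monotone with modulus `α (1 - L)`: its
least-squares part contributes `‖A (x - z)‖² ≥ 0` to `⟪F x - F z, x - z⟫`, and writing
`G = id + (G - id)` with `G - id` being `L`-Lipschitz gives `⟪G x - G z, x - z⟫ ≥ (1 - L) ‖x - z‖²`.
Strong monotonicity with modulus `c` makes `F` expand distances by at least `c`, so
`α (1 - L) ‖x - x*‖ ≤ ‖F x - F x*‖ = ‖F x‖ ≤ ε`.
-/

open RealInnerProductSpace
open scoped InnerProduct

section StrongMonotonicity

variable {X : Type*} [NormedAddCommGroup X] [InnerProductSpace ℝ X]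

theorem mul_norm_sub_le_norm_sub_of_strongly_monotone {F : X → X} {c : ℝ} {x z : X}
    (hF : c * ‖x - z‖ ^ 2 ≤ ⟪F x - F z, x - z⟫) : c * ‖x - z‖ ≤ ‖F x - F z‖ := by
  rcases (norm_nonneg (x - z)).eq_or_lt with h0 | hpos
  · rw [← h0, mul_zero]
    exact norm_nonneg _
  · have hsq : c * ‖x - z‖ * ‖x - z‖ ≤ ‖F x - F z‖ * ‖x - z‖ := by
      calc c * ‖x - z‖ * ‖x - z‖ = c * ‖x - z‖ ^ 2 := by ring
        _ ≤ ⟪F x - F z, x - z⟫ := hF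
        _ ≤ ‖F x - F z‖ * ‖x - z‖ := real_inner_le_norm _ _
    exact le_of_mul_le_mul_right hsq hpos

theorem one_sub_mul_norm_sub_sq_le_inner_of_residual_lipschitz {G : X → X} {L : ℝ} {x z : X}
    (hres : ‖(G x - x) - (G z - z)‖ ≤ L * ‖x - z‖) :
    (1 - L) * ‖x - z‖ ^ 2 ≤ ⟪G x - G z, x - z⟫ := by
  have hsplit : G x - G z = (x - z) + ((G x - x) - (G z - z)) := by abel
  have hres_inner : -(L * ‖x - z‖ ^ 2) ≤ ⟪(G x - x) - (G z - z), x - z⟫ := by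
    have hcs := neg_le_of_abs_le (abs_real_inner_le_norm ((G x - x) - (G z - z)) (x - z))
    have hlip := mul_le_mul_of_nonneg_right hres (norm_nonneg (x - z))
    nlinarith
  rw [hsplit, inner_add_left, real_inner_self_eq_norm_sq]
  linarith

variable {Y : Type*} [NormedAddCommGroup Y] [InnerProductSpace ℝ Y]
  [CompleteSpace X] [CompleteSpace Y]

noncomputable def normalEquationMap (A : X →L[ℝ] Y) (G : X → X) (α : ℝ) (y : Y) (x : X) : X :=
  (A†) (A x - y) + α • G x

theorem inner_normalEquationMap_sub_eq (A : X →L[ℝ] Y) (G : X → X) (α : ℝ) (y : Y)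
    (x z : X) :
    ⟪normalEquationMap A G α y x - normalEquationMap A G α y z, x - z⟫
      = ‖A (x - z)‖ ^ 2 + α * ⟪G x - G z, x - z⟫ := by
  have hsplit : normalEquationMap A G α y x - normalEquationMap A G α y z
      = (A†) (A (x - z)) + α • (G x - G z) := by
    simp only [normalEquationMap, map_sub, smul_sub]
    abel
  rw [hsplit, inner_add_left, ContinuousLinearMap.adjoint_inner_left, real_inner_self_eq_norm_sq,
    real_inner_smul_left]

theorem normalEquationMap_strongly_monotone (A : X →L[ℝ] Y) {G : X → X} {L α : ℝ}
    (hα : 0 ≤ α) (hres : ∀ x z : X, ‖(G x - x) - (G z - z)‖ ≤ L * ‖x - z‖) (y : Y) (x z : X) :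
    α * (1 - L) * ‖x - z‖ ^ 2
      ≤ ⟪normalEquationMap A G α y x - normalEquationMap A G α y z, x - z⟫ := by
  rw [inner_normalEquationMap_sub_eq]
  have hG := mul_le_mul_of_nonneg_left
    (one_sub_mul_norm_sub_sq_le_inner_of_residual_lipschitz (hres x z)) hα
  nlinarith [sq_nonneg ‖A (x - z)‖]

end StrongMonotonicity

theorem stmt16_general {X Y : Type*} [NormedAddCommGroup X] [InnerProductSpace ℝ X]
    [NormedAddCommGroup Y] [InnerProductSpace ℝ Y] [CompleteSpace X] [CompleteSpace Y]
    (A : X →L[ℝ] Y) (G : X → X) (L : ℝ) (hL : L < 1)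
    (hres : ∀ x z : X, ‖(G x - x) - (G z - z)‖ ≤ L * ‖x - z‖)
    (α : ℝ) (hα : 0 < α) (ε : ℝ) (y : Y) (x xs : X)
    (hx : ‖(ContinuousLinearMap.adjoint A) (A x - y) + α • G x‖ ≤ ε)
    (hxs : (ContinuousLinearMap.adjoint A) (A xs - y) + α • G xs = 0) :
    ‖x - xs‖ ≤ ε / (α * (1 - L)) := by
  have hmodulus : 0 < α * (1 - L) := mul_pos hα (sub_pos.mpr hL)
  have hexpand := mul_norm_sub_le_norm_sub_of_strongly_monotone
    (normalEquationMap_strongly_monotone A hα.le hres y x xs)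
  simp only [normalEquationMap, hxs, sub_zero] at hexpand
  rw [le_div_iff₀ hmodulus, mul_comm]
  exact hexpand.trans hx

theorem stmt16 {X Y : Type*} [NormedAddCommGroup X] [InnerProductSpace ℝ X]
    [NormedAddCommGroup Y] [InnerProductSpace ℝ Y] [CompleteSpace X] [CompleteSpace Y]
    (A : X →L[ℝ] Y) (G : X → X) (L : ℝ) (hL : L < 1)
    (hres : ∀ x z : X, ‖(G x - x) - (G z - z)‖ ≤ L * ‖x - z‖)
    (α : ℝ) (hα : 0 < α) (ε : ℝ) (hε : 0 < ε) (y : Y) (x xs : X)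
    (hx : ‖(ContinuousLinearMap.adjoint A) (A x - y) + α • G x‖ ≤ ε)
    (hxs : (ContinuousLinearMap.adjoint A) (A xs - y) + α • G xs = 0) :
    ‖x - xs‖ ≤ ε / (α * (1 - L)) :=
  stmt16_general A G L hL hres α hα ε y x xs hx hxs
end

section
/- Let A : X → Y be bounded linear, G : X → X with contractive residual of constant L < 1, α > 0, y ∈ Y, and let x₁, x₂ be the equilibrium solutions A*(A xᵢ − yᵢ) + α G(xᵢ) = 0 for data y₁, y₂. Then ‖x₁ − x₂‖ ≤ sqrt(1/(2α(1−L))) · ‖y₁ − y₂‖. -/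
/-!
Subtracting the two equilibrium equations and pairing with `d = x₁ - x₂` gives
`‖A d‖² + α ⟪G x₁ - G x₂, d⟫ = ⟪y₁ - y₂, A d⟫`. Since `G - id` is `L`-Lipschitz, `G` is
`(1 - L)`-strongly monotone, and `⟪y₁ - y₂, A d⟫ - ‖A d‖² ≤ ‖y₁ - y₂‖² / 4` by Cauchy–Schwarz and AM–GM,
so `4 α (1 - L) ‖d‖² ≤ ‖y₁ - y₂‖²`, which is stronger than the claimed bound.
-/

open scoped InnerProductSpace

section

variable {X Y : Type*} [NormedAddCommGroup X] [InnerProductSpace ℝ X]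
  [NormedAddCommGroup Y] [InnerProductSpace ℝ Y]

theorem one_sub_mul_norm_sq_le_inner_sub {G : X → X} {L : ℝ} {x z : X}
    (hres : ‖(G x - x) - (G z - z)‖ ≤ L * ‖x - z‖) :
    (1 - L) * ‖x - z‖ ^ 2 ≤ ⟪G x - G z, x - z⟫_ℝ := by
  have hsplit : ⟪G x - G z, x - z⟫_ℝ = ‖x - z‖ ^ 2 + ⟪(G x - x) - (G z - z), x - z⟫_ℝ := by
    rw [← real_inner_self_eq_norm_sq, ← inner_add_left]
    congr 1
    abel
  have hCS : -(L * ‖x - z‖ * ‖x - z‖) ≤ ⟪(G x - x) - (G z - z), x - z⟫_ℝ :=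
    (neg_le_of_abs_le ((abs_real_inner_le_norm _ _).trans
      (mul_le_mul_of_nonneg_right hres (norm_nonneg _))))
  nlinarith

variable [CompleteSpace X] [CompleteSpace Y]

theorem four_mul_norm_sq_le_of_adjoint_add_eq_zero (A : X →L[ℝ] Y) {F : X → X} {c : ℝ}
    {y₁ y₂ : Y} {x₁ x₂ : X}
    (hF : c * ‖x₁ - x₂‖ ^ 2 ≤ ⟪F x₁ - F x₂, x₁ - x₂⟫_ℝ)
    (h₁ : (ContinuousLinearMap.adjoint A) (A x₁ - y₁) + F x₁ = 0)
    (h₂ : (ContinuousLinearMap.adjoint A) (A x₂ - y₂) + F x₂ = 0) :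
    4 * c * ‖x₁ - x₂‖ ^ 2 ≤ ‖y₁ - y₂‖ ^ 2 := by
  set d := x₁ - x₂
  set e := y₁ - y₂
  have hdiff : (ContinuousLinearMap.adjoint A) (A d - e) + (F x₁ - F x₂) = 0 := by
    have hAd : A d - e = (A x₁ - y₁) - (A x₂ - y₂) := by
      simp only [d, e, map_sub]
      abel
    rw [hAd, map_sub, ← sub_eq_zero.mpr (h₁.trans h₂.symm)]
    abel
  have hbalance : ‖A d‖ ^ 2 + ⟪F x₁ - F x₂, d⟫_ℝ = ⟪e, A d⟫_ℝ := by
    have := congrArg (fun v => ⟪v, d⟫_ℝ) hdiff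
    simp only [inner_add_left, ContinuousLinearMap.adjoint_inner_left, inner_sub_left,
      real_inner_self_eq_norm_sq, inner_zero_left] at this
    rw [inner_sub_left]
    linarith
  nlinarith [real_inner_le_norm e (A d), sq_nonneg (‖e‖ - 2 * ‖A d‖)]

end

theorem le_sqrt_one_div_mul_of_mul_sq_le {a b k : ℝ} (hk : 0 < k) (hb : 0 ≤ b)
    (h : k * a ^ 2 ≤ b ^ 2) : a ≤ Real.sqrt (1 / k) * b := by
  rw [← Real.sqrt_sq hb, ← Real.sqrt_mul (by positivity)]
  refine Real.le_sqrt_of_sq_le ?_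
  rw [one_div_mul_eq_div, le_div_iff₀ hk]
  linarith

theorem stmt18 {X Y : Type*} [NormedAddCommGroup X] [InnerProductSpace ℝ X]
    [NormedAddCommGroup Y] [InnerProductSpace ℝ Y] [CompleteSpace X] [CompleteSpace Y]
    (A : X →L[ℝ] Y) (G : X → X) (L : ℝ) (hL : L < 1)
    (hres : ∀ x z : X, ‖(G x - x) - (G z - z)‖ ≤ L * ‖x - z‖)
    (α : ℝ) (hα : 0 < α) (y₁ y₂ : Y) (x₁ x₂ : X)
    (h₁ : (ContinuousLinearMap.adjoint A) (A x₁ - y₁) + α • G x₁ = 0)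
    (h₂ : (ContinuousLinearMap.adjoint A) (A x₂ - y₂) + α • G x₂ = 0) :
    ‖x₁ - x₂‖ ≤ Real.sqrt (1 / (2 * α * (1 - L))) * ‖y₁ - y₂‖ := by
  have hmono : α * (1 - L) * ‖x₁ - x₂‖ ^ 2 ≤ ⟪α • G x₁ - α • G x₂, x₁ - x₂⟫_ℝ := by
    rw [← smul_sub, real_inner_smul_left, mul_assoc]
    exact mul_le_mul_of_nonneg_left (one_sub_mul_norm_sq_le_inner_sub (hres x₁ x₂)) hα.le
  have hstab := four_mul_norm_sq_le_of_adjoint_add_eq_zero A (F := fun x => α • G x) hmono h₁ h₂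
  have hpos : 0 < α * (1 - L) := mul_pos hα (sub_pos.mpr hL)
  refine le_sqrt_one_div_mul_of_mul_sq_le (by linarith) (norm_nonneg _) ?_
  nlinarith [sq_nonneg ‖x₁ - x₂‖]
end
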